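/- arXiv:math/0605693 — 4 statements merged into one kernel-verified Lean document; each statement's English description precedes it below -/
import Mathlib

section
/- Let X be a topological space on which two finite groups Z and W act by homeomorphisms with commuting actions. Let X° = {x ∈ X : the stabilizer of x in W is trivial}, let Y = X/W with the quotient topology, and let f : X → Y be the quotient map (which is an open map since W is finite). Fix z ∈ Z and suppose the fixed-point set Y^z = {y ∈ Y : z·y = y} is irreducible, and X is Hausdorff (separated). If there exist w₁, w₂ ∈ W and x₁, x₂ ∈ X° with wᵢ(xᵢ) = z·xᵢ for i = 1, 2, then w₁ and w₂ are conjugate in W. -/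
/-!
Write `f : X → X/W` for the quotient map. Whenever `w • x = z • x`, the orbit `f x` is fixed by
`z`, and conversely every `z`-fixed orbit contains such a point for some `w`. So the fixed-point
set of `z` in `X/W` is covered by the finitely many sets `f {x | w • x = z • x}`, which are closed
because `X` is Hausdorff and the quotient by a finite group is a closed map. By irreducibility it
lies in one of them, say the one for `w₀`. If `x` has trivial stabilizer and `w • x = z • x`, then
`f x = f x'` with `w₀ • x' = z • x'`, i.e. `x' = u • x`, and `u⁻¹ w₀ u` agrees with `w` at `x`;
freeness at `x` forces `w = u⁻¹ w₀ u`. Hence `w₁` and `w₂` are both conjugate to `w₀`.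
-/

open MulAction

theorem IsIrreducible.exists_subset_of_subset_iUnion {ι X : Type*} [TopologicalSpace X]
    [Finite ι] {s : Set X} {t : ι → Set X} (hs : IsIrreducible s) (ht : ∀ i, IsClosed (t i))
    (hst : s ⊆ ⋃ i, t i) : ∃ i, s ⊆ t i := by
  classical
  have := Fintype.ofFinite ι
  obtain ⟨_, hmem, hsub⟩ := isIrreducible_iff_sUnion_isClosed.mp hs (Finset.univ.image t)
    (by simpa using ht) (by simpa [Set.sUnion_range] using hst)
  obtain ⟨i, -, rfl⟩ := Finset.mem_image.mp hmem
  exact ⟨i, hsub⟩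

section Action

variable {Z W X : Type*} [Group W] [MulAction W X] [SMul Z X]

def twistedFixedPoints (z : Z) (w : W) : Set X := {x | w • x = z • x}

theorem mk_orbitRel_eq_mk_iff {a b : X} :
    Quotient.mk (orbitRel W X) a = Quotient.mk (orbitRel W X) b ↔ ∃ u : W, u • b = a :=
  Quotient.eq.trans (orbitRel_apply.trans mem_orbit_iff)

theorem fixedPoints_subset_iUnion_image_twistedFixedPoints (z : Z) :
    {y : Quotient (orbitRel W X) |
      ∀ x : X, Quotient.mk (orbitRel W X) x = y → Quotient.mk (orbitRel W X) (z • x) = y} ⊆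
      ⋃ w : W, Quotient.mk (orbitRel W X) '' twistedFixedPoints z w := by
  intro y hy
  obtain ⟨x, rfl⟩ := Quotient.exists_rep y
  obtain ⟨w, hw⟩ := mk_orbitRel_eq_mk_iff.mp (hy x rfl)
  exact Set.mem_iUnion.mpr ⟨w, x, hw, rfl⟩

variable [SMulCommClass Z W X]

theorem mk_mem_fixedPoints_of_smul_eq_smul {z : Z} {w : W} {x : X} (hw : w • x = z • x) :
    Quotient.mk (orbitRel W X) x ∈ {y : Quotient (orbitRel W X) |
      ∀ x : X, Quotient.mk (orbitRel W X) x = y → Quotient.mk (orbitRel W X) (z • x) = y} := by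
  intro x' hx'
  obtain ⟨u, rfl⟩ := mk_orbitRel_eq_mk_iff.mp hx'
  refine mk_orbitRel_eq_mk_iff.mpr ⟨u * w, ?_⟩
  rw [mul_smul, hw, ← smul_comm z u x]

theorem isConj_of_mk_mem_image_twistedFixedPoints {z : Z} {w w₀ : W} {x : X}
    (hx : ∀ v : W, v • x = x → v = 1) (hw : w • x = z • x)
    (hmem : Quotient.mk (orbitRel W X) x ∈
      Quotient.mk (orbitRel W X) '' twistedFixedPoints z w₀) :
    IsConj w w₀ := by
  obtain ⟨x', hx', hxx'⟩ := hmem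
  obtain ⟨u, rfl⟩ := mk_orbitRel_eq_mk_iff.mp hxx'
  have hconj : (u⁻¹ * w₀ * u) • x = w • x := by
    calc (u⁻¹ * w₀ * u) • x = u⁻¹ • (z • (u • x)) := by rw [mul_smul, mul_smul, ← hx']
      _ = w • x := by rw [smul_comm z u x, inv_smul_smul, hw]
  have hw_eq : w = u⁻¹ * w₀ * u :=
    inv_mul_eq_one.mp (hx (w⁻¹ * (u⁻¹ * w₀ * u)) (by rw [mul_smul, hconj, inv_smul_smul]))
  exact isConj_iff.mpr ⟨u, by rw [hw_eq]; group⟩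

end Action

section Topology

variable {W X : Type*} [TopologicalSpace X] [Group W] [MulAction W X] [ContinuousConstSMul W X]

theorem isClosed_image_mk_orbitRel [Finite W] {s : Set X} (hs : IsClosed s) :
    IsClosed (Quotient.mk (orbitRel W X) '' s) := by
  rw [← isQuotientMap_quotient_mk'.isClosed_preimage]
  exact (quotient_preimage_image_eq_union_mul (G := W) s).symm ▸
    isClosed_iUnion_of_finite fun w => isClosedMap_smul w s hs

theorem isClosed_twistedFixedPoints {Z : Type*} [SMul Z X] [ContinuousConstSMul Z X] [T2Space X]
    (z : Z) (w : W) : IsClosed (twistedFixedPoints z w : Set X) :=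
  isClosed_eq (continuous_const_smul w) (continuous_const_smul z)

end Topology

theorem general_conjugacy_theorem_general
    {X : Type*} [TopologicalSpace X] [T2Space X]
    {Z W : Type*} [Group Z] [Group W] [Finite W]
    [MulAction Z X] [MulAction W X]
    (hZcont : ∀ z : Z, Continuous fun x : X => z • x)
    (hWcont : ∀ w : W, Continuous fun x : X => w • x)
    (hcomm : ∀ (z : Z) (w : W) (x : X), z • (w • x) = w • (z • x))
    (z : Z)
    (hirr : IsIrreducible {y : Quotient (MulAction.orbitRel W X) |
      ∀ x : X, Quotient.mk (MulAction.orbitRel W X) x = y →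
        Quotient.mk (MulAction.orbitRel W X) (z • x) = y})
    (w₁ w₂ : W) (x₁ x₂ : X)
    (hx₁ : ∀ w : W, w • x₁ = x₁ → w = 1)
    (hx₂ : ∀ w : W, w • x₂ = x₂ → w = 1)
    (h₁ : w₁ • x₁ = z • x₁) (h₂ : w₂ • x₂ = z • x₂) :
    IsConj w₁ w₂ := by
  have : ContinuousConstSMul Z X := ⟨hZcont⟩
  have : ContinuousConstSMul W X := ⟨hWcont⟩
  have : SMulCommClass Z W X := ⟨hcomm⟩
  obtain ⟨w₀, hw₀⟩ := hirr.exists_subset_of_subset_iUnion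
    (fun w => isClosed_image_mk_orbitRel (isClosed_twistedFixedPoints z w))
    (fixedPoints_subset_iUnion_image_twistedFixedPoints z)
  have hconj₁ := isConj_of_mk_mem_image_twistedFixedPoints hx₁ h₁
    (hw₀ (mk_mem_fixedPoints_of_smul_eq_smul h₁))
  have hconj₂ := isConj_of_mk_mem_image_twistedFixedPoints hx₂ h₂
    (hw₀ (mk_mem_fixedPoints_of_smul_eq_smul h₂))
  exact hconj₁.trans hconj₂.symm

/-- **General conjugacy theorem** (Theorem `t:abst`).
Let `X` be a Hausdorff topological space with commuting actions of finite groups `Z` and `W`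
by homeomorphisms.  Let `Y = X/W` with the quotient topology and `f : X → Y` the quotient map.
If `z ∈ Z` has irreducible fixed-point set in `Y`, and `w₁, w₂ ∈ W`, `x₁, x₂ ∈ X` have trivial
`W`-stabilizers and satisfy `wᵢ • xᵢ = z • xᵢ`, then `w₁` and `w₂` are conjugate in `W`. -/
theorem general_conjugacy_theorem
    {X : Type*} [TopologicalSpace X] [T2Space X]
    {Z W : Type*} [Group Z] [Group W] [Finite Z] [Finite W]
    [MulAction Z X] [MulAction W X]
    (hZcont : ∀ z : Z, Continuous fun x : X => z • x)
    (hWcont : ∀ w : W, Continuous fun x : X => w • x)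
    (hcomm : ∀ (z : Z) (w : W) (x : X), z • (w • x) = w • (z • x))
    (z : Z)
    (hirr : IsIrreducible {y : Quotient (MulAction.orbitRel W X) |
      ∀ x : X, Quotient.mk (MulAction.orbitRel W X) x = y →
        Quotient.mk (MulAction.orbitRel W X) (z • x) = y})
    (w₁ w₂ : W) (x₁ x₂ : X)
    (hx₁ : ∀ w : W, w • x₁ = x₁ → w = 1)
    (hx₂ : ∀ w : W, w • x₂ = x₂ → w = 1)
    (h₁ : w₁ • x₁ = z • x₁) (h₂ : w₂ • x₂ = z • x₂) :
    IsConj w₁ w₂ :=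
  general_conjugacy_theorem_general hZcont hWcont hcomm z hirr w₁ w₂ x₁ x₂ hx₁ hx₂ h₁ h₂
end

section
/- In the setting of the previous theorem with X, Z, W, f : X → Y = X/W as above, define for w ∈ W and z ∈ Z the set X(w,z) = {x ∈ X : w(x) = z·x}. Then each X(w,z) is closed in X, the preimage f⁻¹(Y^z) restricted to X° decomposes as the disjoint union over w ∈ W of X°(w,z) := X° ∩ X(w,z), and each X°(w,z) is open in X° ∩ f⁻¹(Y^z). -/
/-!
For `x ∈ X°` the map `w ↦ w • x` is injective, so `w • x = z • x` has at most one solution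
`w ∈ W`; and because the actions commute, `f x ∈ Y^z` says exactly that it has one. Hence the
closed sets `X(w,z)` cut `X° ∩ f⁻¹(Y^z)` into finitely many disjoint pieces, and each piece is
open there, being the complement of the finite union of the others.
-/

open Function MulAction Set

theorem isOpen_of_iUnion_eq_univ_of_pairwise_disjoint {X ι : Type*} [TopologicalSpace X]
    [Finite ι] {s : ι → Set X} (hclosed : ∀ i, IsClosed (s i)) (hunion : ⋃ i, s i = univ)
    (hdisj : Pairwise (Disjoint on s)) (i : ι) : IsOpen (s i) := by
  have hcompl : s i = (⋃ j ∈ ({i}ᶜ : Set ι), s j)ᶜ := by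
    ext x
    simp only [mem_compl_iff, mem_iUnion, mem_singleton_iff, not_exists]
    refine ⟨fun hi j hji hj => (hdisj hji).ne_of_mem hj hi rfl, fun h => ?_⟩
    obtain ⟨j, hj⟩ := mem_iUnion.1 (hunion.symm ▸ mem_univ x : x ∈ ⋃ j, s j)
    by_contra hi
    exact h j (fun hji => hi (hji ▸ hj)) hj
  rw [hcompl]
  exact ((toFinite _).isClosed_biUnion fun j _ => hclosed j).isOpen_compl

section CommutingActions

variable {Z W X : Type*} [Group W] [MulAction W X]

theorem smul_left_injective_of_forall_smul_eq_self {x : X} (hx : ∀ w : W, w • x = x → w = 1) :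
    Injective fun w : W => w • x := by
  intro w w' h
  have hfix : (w'⁻¹ * w) • x = x := by
    rw [mul_smul, show w • x = w' • x from h, inv_smul_smul]
  exact (inv_mul_eq_one.mp (hx _ hfix)).symm

variable [SMul Z X]

theorem mk_smul_eq_mk_iff (z : Z) (x : X) :
    Quotient.mk (orbitRel W X) (z • x) = Quotient.mk (orbitRel W X) x ↔
      ∃ w : W, w • x = z • x :=
  Quotient.eq.trans mem_orbit_iff

variable [SMulCommClass Z W X]

theorem orbitRel_smul {x y : X} (h : orbitRel W X x y) (z : Z) :
    orbitRel W X (z • x) (z • y) := by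
  obtain ⟨w, rfl⟩ := h
  exact ⟨w, (smul_comm z w y).symm⟩

theorem forall_mk_eq_imp_mk_smul_eq_iff (z : Z) (x : X) :
    (∀ x' : X, Quotient.mk (orbitRel W X) x' = Quotient.mk (orbitRel W X) x →
        Quotient.mk (orbitRel W X) (z • x') = Quotient.mk (orbitRel W X) x) ↔
      ∃ w : W, w • x = z • x := by
  rw [← mk_smul_eq_mk_iff]
  refine ⟨fun h => h x rfl, fun h x' hx' => ?_⟩
  rw [← h]
  exact Quotient.sound (orbitRel_smul (Quotient.exact hx') z)

end CommutingActions

theorem decomposition_of_fixed_preimage_general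
    {X : Type*} [TopologicalSpace X] [T2Space X]
    {Z W : Type*} [Group Z] [Group W] [Finite W]
    [MulAction Z X] [MulAction W X]
    (hZcont : ∀ z : Z, Continuous fun x : X => z • x)
    (hWcont : ∀ w : W, Continuous fun x : X => w • x)
    (hcomm : ∀ (z : Z) (w : W) (x : X), z • (w • x) = w • (z • x))
    (z : Z)
    (X₀ : Set X) (hX₀ : X₀ = {x : X | ∀ w : W, w • x = x → w = 1})
    (Yz : Set (Quotient (MulAction.orbitRel W X)))
    (hYz : Yz = {y | ∀ x : X, Quotient.mk (MulAction.orbitRel W X) x = y →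
        Quotient.mk (MulAction.orbitRel W X) (z • x) = y}) :
    (∀ w : W, IsClosed {x : X | w • x = z • x}) ∧
    (X₀ ∩ (fun x => Quotient.mk (MulAction.orbitRel W X) x) ⁻¹' Yz =
      ⋃ w : W, X₀ ∩ {x : X | w • x = z • x}) ∧
    (∀ w w' : W, w ≠ w' →
      Disjoint (X₀ ∩ {x : X | w • x = z • x}) (X₀ ∩ {x : X | w' • x = z • x})) ∧
    (∀ w : W, IsOpen {p : (X₀ ∩ (fun x => Quotient.mk (MulAction.orbitRel W X) x) ⁻¹' Yz :
        Set X) | w • (p : X) = z • (p : X)}) := by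
  have : SMulCommClass Z W X := ⟨hcomm⟩
  subst hX₀ hYz
  have hfixed (x : X) := forall_mk_eq_imp_mk_smul_eq_iff (W := W) z x
  have hinj {x : X} (hx : ∀ w : W, w • x = x → w = 1) {w w' : W}
      (hw : w • x = z • x) (hw' : w' • x = z • x) : w = w' :=
    smul_left_injective_of_forall_smul_eq_self hx (hw.trans hw'.symm)
  refine ⟨fun w => isClosed_eq (hWcont w) (hZcont z), ?_, ?_, fun w => ?_⟩
  · ext x
    simp only [mem_inter_iff, mem_preimage, mem_ofPred_eq, hfixed x, mem_iUnion, exists_and_left]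
  · exact fun w w' hne => disjoint_left.2 fun x ⟨hx, hw⟩ ⟨_, hw'⟩ => hne (hinj hx hw hw')
  · refine isOpen_of_iUnion_eq_univ_of_pairwise_disjoint
      (s := fun w => {p : (_ : Set X) | w • (p : X) = z • (p : X)})
      (fun w => isClosed_eq ((hWcont w).comp continuous_subtype_val)
        ((hZcont z).comp continuous_subtype_val))
      (eq_univ_of_forall fun p => mem_iUnion.2 ((hfixed p).1 p.2.2))
      (fun w w' hne => disjoint_left.2 fun p hw hw' => hne (hinj p.2.1 hw hw')) w

/-- In the setting of the general conjugacy theorem: `X` Hausdorff with commuting actions of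
finite groups `Z`, `W` by homeomorphisms, `X° = {x | W-stabilizer of x is trivial}`,
`f : X → Y = X/W` the quotient map, `Y^z` the fixed set of `z` on `Y`, and
`X(w,z) = {x | w • x = z • x}`.  Then each `X(w,z)` is closed, `X° ∩ f⁻¹(Y^z)` is the
disjoint union over `w ∈ W` of `X°(w,z) = X° ∩ X(w,z)`, and each `X°(w,z)` is open in the
subspace `X° ∩ f⁻¹(Y^z)`. -/
theorem decomposition_of_fixed_preimage
    {X : Type*} [TopologicalSpace X] [T2Space X]
    {Z W : Type*} [Group Z] [Group W] [Finite Z] [Finite W]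
    [MulAction Z X] [MulAction W X]
    (hZcont : ∀ z : Z, Continuous fun x : X => z • x)
    (hWcont : ∀ w : W, Continuous fun x : X => w • x)
    (hcomm : ∀ (z : Z) (w : W) (x : X), z • (w • x) = w • (z • x))
    (z : Z)
    (X₀ : Set X) (hX₀ : X₀ = {x : X | ∀ w : W, w • x = x → w = 1})
    (Yz : Set (Quotient (MulAction.orbitRel W X)))
    (hYz : Yz = {y | ∀ x : X, Quotient.mk (MulAction.orbitRel W X) x = y →
        Quotient.mk (MulAction.orbitRel W X) (z • x) = y}) :
    (∀ w : W, IsClosed {x : X | w • x = z • x}) ∧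
    (X₀ ∩ (fun x => Quotient.mk (MulAction.orbitRel W X) x) ⁻¹' Yz =
      ⋃ w : W, X₀ ∩ {x : X | w • x = z • x}) ∧
    (∀ w w' : W, w ≠ w' →
      Disjoint (X₀ ∩ {x : X | w • x = z • x}) (X₀ ∩ {x : X | w' • x = z • x})) ∧
    (∀ w : W, IsOpen {p : (X₀ ∩ (fun x => Quotient.mk (MulAction.orbitRel W X) x) ⁻¹' Yz :
        Set X) | w • (p : X) = z • (p : X)}) :=
  decomposition_of_fixed_preimage_general hZcont hWcont hcomm z X₀ hX₀ Yz hYz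
end

section
/- Let R be a reduced irreducible root system with Weyl group W, and let ψ : P(R^∨)/Q(R^∨) → W be the homomorphism defined via the stabilizer Γ_C of the fundamental alcove C: ψ = pr ∘ ξ⁻¹ where ξ : Γ_C ≅ P(R^∨)/Q(R^∨) and pr : W_e → W. Let e ∈ C be the barycenter of the fundamental alcove and let u = Exp(e) ∈ T = Hom(P(R), S¹) be its image under the exponential map identifying T with E/Q(R^∨). Then u is a regular element of T (i.e., α(u) ≠ 1 for all α ∈ R), and for every class ν ∈ P(R^∨)/Q(R^∨) one has t_{−ν}(e) ≡ ψ(ν)(e) modulo Q(R^∨), i.e., x_ν · u = ψ(ν)(u) in T, where x_ν ∈ T is the central element determined by ν. -/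
/-- A root system: a root pairing whose roots and coroots span their ambient modules
(the `RootSystem` structure of the older Mathlib). -/
structure RootSystem (ι R M N : Type*) [CommRing R] [AddCommGroup M] [Module R M]
    [AddCommGroup N] [Module R N] extends RootPairing ι R M N where
  span_eq_top : Submodule.span R (Set.range root) = ⊤
  span_eq_top' : Submodule.span R (Set.range coroot) = ⊤

/-!
The open alcove `C` is the open simplex whose barycentric coordinates are `1 - θ` and
`δ j • α_{s j}`; its vertices are `0` and `ω j / δ j`, and `e` is its centroid. A positive root
lies between `0` and `θ` in the dominance order, so it pairs with every point of `C` into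
`(0, 1)`; hence `e` lies on no affine root hyperplane. An affine automorphism preserving an open
simplex preserves its closure, hence permutes the extreme points of the closure, which are the
vertices, hence fixes their centroid. For `T = t_μ ∘ g` this gives `g e = e - μ`.
-/

open Set

namespace AffineEquiv

variable {k E F : Type*} [Ring k] [PartialOrder k] [IsOrderedRing k]
  [AddCommGroup E] [Module k E] [AddCommGroup F] [Module k F]

theorem image_extremePoints (f : E ≃ᵃ[k] F) (s : Set E) :
    f '' s.extremePoints k = (f '' s).extremePoints k := by
  ext y
  obtain ⟨x, rfl⟩ := f.surjective y
  have hseg : ∀ a b, f '' openSegment k a b = openSegment k (f a) (f b) :=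
    image_openSegment k f.toAffineMap
  simp only [mem_extremePoints, f.surjective.forall, f.injective.mem_set_image,
    f.injective.eq_iff, ← hseg]

end AffineEquiv

namespace AffineBasis

section AffineSpace

variable {ι k V P : Type*} [Fintype ι] [DecidableEq ι] [Field k] [AddCommGroup V] [Module k V]
  [FiniteDimensional k V] [AddTorsor V P]

theorem exists_coord_eq (v : ι → P) (c : ι → P →ᵃ[k] k)
    (hc : ∀ i j, c i (v j) = if i = j then 1 else 0)
    (hcard : Fintype.card ι = Module.finrank k V + 1) :
    ∃ b : AffineBasis ι k P, ∀ i, b.coord i = c i := by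
  have hind : AffineIndependent k v := by
    refine .of_comp (AffineMap.pi c) ?_
    have hcv : AffineMap.pi c ∘ v = fun j => Pi.single j 1 := by
      ext j i
      simp [hc, Pi.single_apply, eq_comm]
    rw [hcv]
    exact (Pi.linearIndependent_single_one ι k).affineIndependent
  have htot : affineSpan k (range v) = ⊤ :=
    hind.affineSpan_eq_top_iff_card_eq_finrank_add_one.2 hcard
  refine ⟨⟨v, hind, htot⟩, fun i => AffineMap.ext_on htot ?_⟩
  rintro _ ⟨j, rfl⟩
  exact (coord_apply ⟨v, hind, htot⟩ i j).trans (hc i j).symm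

end AffineSpace

section LinearOrderedField

variable {ι k E : Type*} [Fintype ι] [Field k] [LinearOrder k] [IsStrictOrderedRing k]
  [AddCommGroup E] [Module k E]

theorem eq_of_mem_convexHull_of_coord_eq_one (b : AffineBasis ι k E) {x : E} {i : ι}
    (hx : x ∈ convexHull k (range b)) (hi : b.coord i x = 1) : x = b i := by
  classical
  rw [b.convexHull_eq_nonneg_coord] at hx
  have hsum := b.sum_coord_apply_eq_one x
  rw [← Finset.add_sum_erase _ _ (Finset.mem_univ i), hi, add_eq_left,
    Finset.sum_eq_zero_iff_of_nonneg fun j _ => hx j] at hsum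
  refine b.ext_elem fun j => ?_
  rw [b.coord_apply]
  split_ifs with hij
  · rw [hij, hi]
  · exact hsum j (Finset.mem_erase.2 ⟨hij, Finset.mem_univ j⟩)

theorem coord_le_one_of_mem_convexHull (b : AffineBasis ι k E) {x : E}
    (hx : x ∈ convexHull k (range b)) (i : ι) : b.coord i x ≤ 1 := by
  rw [b.convexHull_eq_nonneg_coord] at hx
  rw [← b.sum_coord_apply_eq_one x]
  exact Finset.single_le_sum (fun j _ => hx j) (Finset.mem_univ i)

theorem extremePoints_convexHull (b : AffineBasis ι k E) :
    (convexHull k (range b)).extremePoints k = range b := by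
  refine extremePoints_convexHull_subset.antisymm ?_
  rintro _ ⟨i, rfl⟩
  rw [mem_extremePoints_iff_left]
  refine ⟨subset_convexHull k _ (mem_range_self i), fun x hx y hy hxy => ?_⟩
  obtain ⟨a, c, ha, hc, hac, hcomb⟩ := hxy
  have hx1 := b.coord_le_one_of_mem_convexHull hx i
  have hy1 := b.coord_le_one_of_mem_convexHull hy i
  have h := congrArg (b.coord i) hcomb
  rw [Convex.combo_affine_apply hac, b.coord_apply_eq, smul_eq_mul, smul_eq_mul] at h
  have hxi : b.coord i x = 1 := by nlinarith
  exact b.eq_of_mem_convexHull_of_coord_eq_one hx hxi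

end LinearOrderedField

section Real

variable {ι E : Type*} [Fintype ι] [NormedAddCommGroup E] [NormedSpace ℝ E]

theorem closure_interior_convexHull (b : AffineBasis ι ℝ E) :
    closure (interior (convexHull ℝ (range b))) = convexHull ℝ (range b) := by
  have := b.finiteDimensional
  rw [(convex_convexHull ℝ _).closure_interior_eq_closure_of_nonempty_interior
    ⟨_, b.centroid_mem_interior_convexHull⟩, ((finite_range b).isClosed_convexHull ℝ).closure_eq]

theorem isFixedPt_centroid_of_image_interior_convexHull (b : AffineBasis ι ℝ E) (f : E ≃ᵃ[ℝ] E)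
    (hf : f '' interior (convexHull ℝ (range b)) = interior (convexHull ℝ (range b))) :
    Function.IsFixedPt f (Finset.univ.centroid ℝ b) := by
  have := b.finiteDimensional
  have hhull : f '' convexHull ℝ (range b) = convexHull ℝ (range b) := by
    rw [← b.closure_interior_convexHull, ← f.coe_toHomeomorphOfFiniteDimensional,
      Homeomorph.image_closure, f.coe_toHomeomorphOfFiniteDimensional, hf]
  have hvert : f '' range b = range b := by
    rw [← b.extremePoints_convexHull, f.image_extremePoints, hhull]
  have := b.nonempty
  change f.toAffineMap _ = _
  rw [Finset.centroid_def, Finset.univ.map_affineCombination _ _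
    (Finset.univ.sum_centroidWeights_eq_one_of_nonempty ℝ Finset.univ_nonempty) f.toAffineMap,
    ← Finset.centroid_def]
  refine Finset.univ.centroid_eq_of_inj_on_of_image_eq ℝ Finset.univ
    (fun i _ j _ h => b.ind.injective (f.injective h)) (fun i _ j _ h => b.ind.injective h) ?_
  rw [Finset.coe_univ, image_univ, image_univ, ← hvert, ← range_comp]
  rfl

end Real

end AffineBasis

section Alcove

variable {l : ℕ} {ι V : Type*} [AddCommGroup V] [Module ℝ V]
  (P : RootSystem ι ℝ V (Fin l → ℝ)) (s : Fin l → ι) (θ : ι) (δ : Fin l → ℕ)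

theorem toLinearMap_sum_smul_root_apply_fundamental {ω : Fin l → Fin l → ℝ}
    (hω : ∀ i j, P.toLinearMap (P.root (s i)) (ω j) = if i = j then 1 else 0)
    (c : Fin l → ℝ) (j : Fin l) :
    P.toLinearMap (∑ i, c i • P.root (s i)) (ω j) = c j := by
  simp [hω]

theorem one_le_highestRoot_coeff {ω : Fin l → Fin l → ℝ}
    (hω : ∀ i j, P.toLinearMap (P.root (s i)) (ω j) = if i = j then 1 else 0)
    (hθ : P.root θ = ∑ i, (δ i : ℝ) • P.root (s i))
    (hhighest : ∀ k, ∃ c : Fin l → ℕ, P.root θ - P.root k = ∑ j, (c j : ℝ) • P.root (s j))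
    (j : Fin l) : (1 : ℝ) ≤ δ j := by
  obtain ⟨c, hc⟩ := hhighest (s j)
  have h := congrArg (fun v => P.toLinearMap v (ω j)) hc
  simp only [map_sub, LinearMap.sub_apply] at h
  rw [hθ, toLinearMap_sum_smul_root_apply_fundamental P s hω,
    toLinearMap_sum_smul_root_apply_fundamental P s hω, hω, if_pos rfl] at h
  linarith [(c j).cast_nonneg (α := ℝ)]

theorem toLinearMap_sum_smul_root_nonneg {x : Fin l → ℝ}
    (hx : ∀ i, 0 < P.toLinearMap (P.root (s i)) x) (c : Fin l → ℕ) :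
    0 ≤ P.toLinearMap (∑ j, (c j : ℝ) • P.root (s j)) x := by
  simp only [map_sum, map_smul, LinearMap.sum_apply, LinearMap.smul_apply, smul_eq_mul]
  exact Finset.sum_nonneg fun j _ => mul_nonneg (c j).cast_nonneg (hx j).le

theorem toLinearMap_root_mem_Ioo_of_eq_sum
    (hhighest : ∀ k, ∃ c : Fin l → ℕ, P.root θ - P.root k = ∑ j, (c j : ℝ) • P.root (s j))
    {x : Fin l → ℝ} (hx : ∀ i, 0 < P.toLinearMap (P.root (s i)) x)
    (hxθ : P.toLinearMap (P.root θ) x < 1)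
    {k : ι} {c : Fin l → ℕ} (hk : P.root k = ∑ j, (c j : ℝ) • P.root (s j)) :
    P.toLinearMap (P.root k) x ∈ Ioo 0 1 := by
  constructor
  · obtain ⟨j, hj⟩ : ∃ j, c j ≠ 0 := by
      by_contra! hc
      exact P.ne_zero k (by simp [hk, hc])
    rw [hk]
    simp only [map_sum, map_smul, LinearMap.sum_apply, LinearMap.smul_apply, smul_eq_mul]
    exact Finset.sum_pos' (fun i _ => mul_nonneg (c i).cast_nonneg (hx i).le)
      ⟨j, Finset.mem_univ j, mul_pos (by positivity) (hx j)⟩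
  · obtain ⟨d, hd⟩ := hhighest k
    have h := toLinearMap_sum_smul_root_nonneg P s hx d
    rw [← hd, map_sub, LinearMap.sub_apply] at h
    linarith

theorem toLinearMap_root_ne_intCast
    (hbase : ∀ k, (∃ c : Fin l → ℕ, P.root k = ∑ j, (c j : ℝ) • P.root (s j)) ∨
      (∃ c : Fin l → ℕ, P.root k = -∑ j, (c j : ℝ) • P.root (s j)))
    (hhighest : ∀ k, ∃ c : Fin l → ℕ, P.root θ - P.root k = ∑ j, (c j : ℝ) • P.root (s j))
    {x : Fin l → ℝ} (hx : ∀ i, 0 < P.toLinearMap (P.root (s i)) x)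
    (hxθ : P.toLinearMap (P.root θ) x < 1) (k : ι) (n : ℤ) :
    P.toLinearMap (P.root k) x ≠ n := by
  intro hkn
  rcases hbase k with ⟨c, hc⟩ | ⟨c, hc⟩
  · obtain ⟨h0, h1⟩ := toLinearMap_root_mem_Ioo_of_eq_sum P s θ hhighest hx hxθ hc
    rw [hkn] at h0 h1
    norm_cast at h0 h1
    omega
  · obtain ⟨k', hk'⟩ := P.neg_root_mem k
    obtain ⟨h0, h1⟩ := toLinearMap_root_mem_Ioo_of_eq_sum P s θ hhighest hx hxθ
      (hk'.trans (neg_eq_iff_eq_neg.2 hc))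
    rw [hk', map_neg, LinearMap.neg_apply, hkn] at h0 h1
    have : (-1 : ℝ) < n ∧ (n : ℝ) < 0 := ⟨by linarith, by linarith⟩
    norm_cast at this
    omega

/-- Barycentric coordinates of the fundamental alcove: vertex `none` is the origin and vertex
`some j` is `ω j / δ j`. -/
def alcoveCoord : Option (Fin l) → (Fin l → ℝ) →ᵃ[ℝ] ℝ
  | none => AffineMap.const ℝ (Fin l → ℝ) (1 : ℝ) - (P.toLinearMap (P.root θ)).toAffineMap
  | some j => (δ j : ℝ) • (P.toLinearMap (P.root (s j))).toAffineMap

@[simp]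
theorem alcoveCoord_none (x : Fin l → ℝ) :
    alcoveCoord P s θ δ none x = 1 - P.toLinearMap (P.root θ) x := rfl

@[simp]
theorem alcoveCoord_some (j : Fin l) (x : Fin l → ℝ) :
    alcoveCoord P s θ δ (some j) x = δ j * P.toLinearMap (P.root (s j)) x := rfl

theorem exists_affineBasis_coord_eq_alcoveCoord {ω : Fin l → Fin l → ℝ}
    (hω : ∀ i j, P.toLinearMap (P.root (s i)) (ω j) = if i = j then 1 else 0)
    (hθ : P.root θ = ∑ i, (δ i : ℝ) • P.root (s i)) (hδ : ∀ j, (δ j : ℝ) ≠ 0) :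
    ∃ b : AffineBasis (Option (Fin l)) ℝ (Fin l → ℝ), ∀ i, b.coord i = alcoveCoord P s θ δ i := by
  let v : Option (Fin l) → Fin l → ℝ := fun i => i.elim 0 fun j => (δ j : ℝ)⁻¹ • ω j
  have hv : ∀ i j, alcoveCoord P s θ δ i (v j) = if i = j then 1 else 0 := by
    rintro (_ | i) (_ | j)
    · simp [v]
    · simp [v, hθ, hω, hδ]
    · simp [v]
    · by_cases hij : i = j
      · subst hij
        simp [v, hω, hδ]
      · simp [v, hω, hij]
  exact AffineBasis.exists_coord_eq v _ hv (by simp)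

theorem alcoveCoord_barycenter {ω : Fin l → Fin l → ℝ}
    (hω : ∀ i j, P.toLinearMap (P.root (s i)) (ω j) = if i = j then 1 else 0)
    (hθ : P.root θ = ∑ i, (δ i : ℝ) • P.root (s i)) (hδ : ∀ j, (δ j : ℝ) ≠ 0)
    (i : Option (Fin l)) :
    alcoveCoord P s θ δ i (((l : ℝ) + 1)⁻¹ • ∑ j, (δ j : ℝ)⁻¹ • ω j) = ((l : ℝ) + 1)⁻¹ := by
  rcases i with _ | i
  · simp [hθ, hω, hδ]
    field_simp
    ring
  · simp [hω]
    rw [mul_left_comm, mul_inv_cancel₀ (hδ i), mul_one]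

end Alcove

theorem barycenter_regular_and_psi_identity_general
    {l : ℕ} {ι V : Type*} [AddCommGroup V] [Module ℝ V]
    (P : RootSystem ι ℝ V (Fin l → ℝ))
    (s : Fin l → ι)
    (hbase : ∀ k : ι,
      (∃ c : Fin l → ℕ, P.root k = ∑ j, (c j : ℝ) • P.root (s j)) ∨
      (∃ c : Fin l → ℕ, P.root k = -∑ j, (c j : ℝ) • P.root (s j)))
    (θ : ι) (δ : Fin l → ℕ)
    (hθ : P.root θ = ∑ i, (δ i : ℝ) • P.root (s i))
    (hhighest : ∀ k : ι, ∃ c : Fin l → ℕ,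
      P.root θ - P.root k = ∑ j, (c j : ℝ) • P.root (s j))
    (ω : Fin l → (Fin l → ℝ))
    (hω : ∀ i j : Fin l, P.toLinearMap (P.root (s i)) (ω j) = if i = j then 1 else 0)
    (PRv QRv : AddSubgroup (Fin l → ℝ))
    (Hc : Set (Fin l → ℝ))
    (hHc : Hc = {e : Fin l → ℝ | ∀ i : ι, ∀ n : ℤ, P.toLinearMap (P.root i) e ≠ (n : ℝ)})
    (C : Set (Fin l → ℝ))
    (hC : C = {e : Fin l → ℝ |
      (∀ i : Fin l, 0 < P.toLinearMap (P.root (s i)) e) ∧ P.toLinearMap (P.root θ) e < 1})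
    -- the barycenter of the fundamental alcove:
    (e : Fin l → ℝ) (he : e = ((l : ℝ) + 1)⁻¹ • ∑ j, ((δ j : ℝ))⁻¹ • ω j) :
    e ∈ Hc ∧
    (∀ (T : (Fin l → ℝ) ≃ (Fin l → ℝ)) (g : (Fin l → ℝ) ≃ₗ[ℝ] (Fin l → ℝ))
        (μ : Fin l → ℝ), g ∈ Subgroup.closure (Set.range P.flip.reflection) → μ ∈ PRv → (∀ y, T y = g y + μ) →
        T '' C = C → T e = e ∧ (e - μ) - g e ∈ QRv) := by
  have hδpos : ∀ j, (0 : ℝ) < δ j := fun j =>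
    zero_lt_one.trans_le (one_le_highestRoot_coeff P s θ δ hω hθ hhighest j)
  have hδ : ∀ j, (δ j : ℝ) ≠ 0 := fun j => (hδpos j).ne'
  obtain ⟨b, hb⟩ := exists_affineBasis_coord_eq_alcoveCoord P s θ δ hω hθ hδ
  have hCb : C = interior (convexHull ℝ (range b)) := by
    ext x
    simp [b.interior_convexHull, hC, hb, Option.forall, and_comm, mul_pos_iff_of_pos_left, hδpos]
  have heb : e = Finset.univ.centroid ℝ b := b.ext_elem fun i => by
    rw [b.coord_apply_centroid (Finset.mem_univ i), hb, he, alcoveCoord_barycenter P s θ δ hω hθ hδ]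
    simp
  have heC : e ∈ C := hCb ▸ heb ▸ b.centroid_mem_interior_convexHull
  rw [hC] at heC
  refine ⟨hHc ▸ toLinearMap_root_ne_intCast P s θ hbase hhighest heC.1 heC.2, ?_⟩
  intro T g μ _ _ hT hTC
  let f : (Fin l → ℝ) ≃ᵃ[ℝ] (Fin l → ℝ) :=
    { T with linear := g, map_vadd' := fun x v => by simp [hT, add_assoc] }
  have hTe : T e = e := heb ▸ b.isFixedPt_centroid_of_image_interior_convexHull f (hCb ▸ hTC)
  refine ⟨hTe, ?_⟩
  rw [eq_sub_of_add_eq ((hT e).symm.trans hTe), sub_self]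
  exact QRv.zero_mem

/-- **The barycenter of the fundamental alcove and the homomorphism `ψ`**
(first part of Theorem `t:monodromy`).  In the setting of a reduced irreducible
crystallographic root system `P` with coweight space `E = Fin l → ℝ`, base `s`, highest root
`θ = Σ δᵢ α_{s i}` and fundamental coweights `ω`, the torus `T = Hom(P(R), S¹)` is identified
with `E/Q(R^∨)` via `Exp`, and the barycenter of the fundamental alcove
`C = {e | 0 < ⟨α_{s i}, e⟩, ⟨θ, e⟩ < 1}` is `e = (l+1)⁻¹ Σⱼ δⱼ⁻¹ ωⱼ`.  Then `u = Exp(e)` is a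
regular element of `T` (no affine root hyperplane passes through `e`), every element of the
stabilizer `Γ_C ⊆ W_e = P(R^∨) ⋊ W` of `C` fixes `e`, and for every `ν ∈ P(R^∨)/Q(R^∨)`,
writing `ξ⁻¹(ν) = t_μ ∘ ψ(ν) ∈ Γ_C` (`μ ∈ PRv` representing `ν`, `g = ψ(ν) ∈ W`), one has
`t_{-ν}(e) ≡ ψ(ν)(e) mod Q(R^∨)`, i.e. `x_ν · u = ψ(ν)(u)` in `T`. -/
theorem barycenter_regular_and_psi_identity
    {l : ℕ} {ι V : Type*} [Fintype ι] [AddCommGroup V] [Module ℝ V]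
    (P : RootSystem ι ℝ V (Fin l → ℝ))
    (hred : P.IsReduced) (hcrys : P.IsCrystallographic)
    (hcorootSpan : Submodule.span ℝ (Set.range P.coroot) = ⊤)
    (hirr : ¬∃ s : Set ι, s.Nonempty ∧ sᶜ.Nonempty ∧
      ∀ i ∈ s, ∀ j ∈ sᶜ, P.toLinearMap (P.root i) (P.coroot j) = 0)
    (s : Fin l → ι)
    (hbase : ∀ k : ι,
      (∃ c : Fin l → ℕ, P.root k = ∑ j, (c j : ℝ) • P.root (s j)) ∨
      (∃ c : Fin l → ℕ, P.root k = -∑ j, (c j : ℝ) • P.root (s j)))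
    (θ : ι) (δ : Fin l → ℕ)
    (hθ : P.root θ = ∑ i, (δ i : ℝ) • P.root (s i))
    (hhighest : ∀ k : ι, ∃ c : Fin l → ℕ,
      P.root θ - P.root k = ∑ j, (c j : ℝ) • P.root (s j))
    (ω : Fin l → (Fin l → ℝ))
    (hω : ∀ i j : Fin l, P.toLinearMap (P.root (s i)) (ω j) = if i = j then 1 else 0)
    (PRv QRv : AddSubgroup (Fin l → ℝ))
    (hPRv : PRv = {n : Fin l → ℝ | ∀ i : ι, ∃ z : ℤ, P.toLinearMap (P.root i) n = (z : ℝ)})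
    (hQRv : QRv = AddSubgroup.closure (Set.range P.coroot))
    (Hc : Set (Fin l → ℝ))
    (hHc : Hc = {e : Fin l → ℝ | ∀ i : ι, ∀ n : ℤ, P.toLinearMap (P.root i) e ≠ (n : ℝ)})
    (C : Set (Fin l → ℝ))
    (hC : C = {e : Fin l → ℝ |
      (∀ i : Fin l, 0 < P.toLinearMap (P.root (s i)) e) ∧ P.toLinearMap (P.root θ) e < 1})
    -- the barycenter of the fundamental alcove:
    (e : Fin l → ℝ) (he : e = ((l : ℝ) + 1)⁻¹ • ∑ j, ((δ j : ℝ))⁻¹ • ω j) :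
    e ∈ Hc ∧
    (∀ (T : (Fin l → ℝ) ≃ (Fin l → ℝ)) (g : (Fin l → ℝ) ≃ₗ[ℝ] (Fin l → ℝ))
        (μ : Fin l → ℝ), g ∈ Subgroup.closure (Set.range P.flip.reflection) → μ ∈ PRv → (∀ y, T y = g y + μ) →
        T '' C = C → T e = e ∧ (e - μ) - g e ∈ QRv) :=
  barycenter_regular_and_psi_identity_general P s hbase θ δ hθ hhighest ω hω PRv QRv Hc hHc C hC e
    he
end

section
/- Let G be a connected simply connected simple complex algebraic group with maximal torus A, Weyl group W, center Z, and the homomorphism ψ : P(R^∨)/Q(R^∨) → W as above (with a fixed isomorphism Z ≅ P(R^∨)/Q(R^∨), x ↦ μ_x). Then there exists a single regular element u ∈ A such that ψ(μ_x)(u) = x·u simultaneously for all x ∈ Z. -/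
/-!
Let `Γ` be the group of affine automorphisms `y ↦ g y + μ` of `E` with `g` in the Weyl group that
map the alcove `C` onto itself. Every root takes values in `(0, 1)` or `(-1, 0)` on `C`; hence
points of `C` are regular, and `C` is bounded, so no nonzero translation preserves it and an element
of `Γ` is determined by its linear part. The Weyl group is finite because it permutes the coroots,
which span `E`, so `Γ` is finite. Averaging a point of the convex set `C` over `Γ` gives a point
`n ∈ C` fixed by every element of `Γ`, i.e. `(n - μ) - g n = 0`.
-/

open Set

namespace RootPairing

variable {ι R M N : Type*} [CommRing R] [AddCommGroup M] [Module R M] [AddCommGroup N]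
  [Module R N] (P : RootPairing ι R M N)

lemma image_range_root_of_mem_closure_reflection {g : M ≃ₗ[R] M}
    (hg : g ∈ Subgroup.closure (range P.reflection)) : g '' range P.root = range P.root := by
  induction hg using Subgroup.closure_induction with
  | mem _ h => obtain ⟨i, rfl⟩ := h; exact P.reflection_image_eq i
  | one => exact image_id _
  | mul g h _ _ hg hh =>
    change (fun x ↦ g (h x)) '' _ = _
    rw [← image_image, hh, hg]
  | inv g _ hg =>
    conv_lhs => rw [← hg]
    exact g.toEquiv.symm_image_image _

lemma finite_closure_range_reflection [Finite ι]
    (hspan : Submodule.span R (range P.root) = ⊤) :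
    Finite (Subgroup.closure (range P.reflection)) := by
  let restrict (g : Subgroup.closure (range P.reflection)) : range P.root → range P.root :=
    fun x ↦ ⟨g.1 x,
      (P.image_range_root_of_mem_closure_reflection g.2).subset (mem_image_of_mem _ x.2)⟩
  refine Finite.of_injective restrict fun g h hgh ↦
    Subtype.ext <| LinearEquiv.toLinearMap_injective ?_
  refine LinearMap.ext_on hspan fun x hx ↦ ?_
  simpa [restrict] using congrArg Subtype.val (congrFun hgh ⟨x, hx⟩)

lemma eq_zero_of_forall_root'_apply_eq_zero (hspan : Submodule.span R (range P.root) = ⊤)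
    {x : N} (hx : ∀ k, P.root' k x = 0) : x = 0 := by
  refine (LinearMap.IsPerfPair.bijective_right P.toLinearMap).injective ?_
  rw [map_zero]
  exact LinearMap.ext_on hspan fun _ ⟨k, hk⟩ ↦ hk ▸ hx k

end RootPairing

namespace AffineEquiv

variable {E : Type*} [AddCommGroup E] [Module ℝ E]

def stabilizer (W : Subgroup (E ≃ₗ[ℝ] E)) (C : Set E) : Subgroup (E ≃ᵃ[ℝ] E) where
  carrier := {A | A.linear ∈ W ∧ A '' C = C}
  mul_mem' {A B} hA hB := ⟨W.mul_mem hA.1 hB.1, by rw [coe_mul, image_comp, hB.2, hA.2]⟩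
  one_mem' := ⟨W.one_mem, image_id C⟩
  inv_mem' {A} hA := ⟨W.inv_mem hA.1, by
    conv_lhs => rw [← hA.2]
    exact A.toEquiv.symm_image_image C⟩

lemma apply_eq_add_apply_zero (A : E ≃ᵃ[ℝ] E) (hA : A.linear = LinearEquiv.refl ℝ E) (x : E) :
    A x = x + A 0 := by
  simpa [hA] using A.map_vadd 0 x

lemma finite_stabilizer {W : Subgroup (E ≃ₗ[ℝ] E)} [Finite W] {C : Set E}
    (hC : ∀ v, (∀ x ∈ C, x + v ∈ C) → v = 0) : Finite (stabilizer W C) := by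
  have translation_trivial (A : E ≃ᵃ[ℝ] E) (hA : A ∈ stabilizer W C)
      (hlin : A.linear = LinearEquiv.refl ℝ E) : A = 1 := by
    have hA0 : A 0 = 0 := hC _ fun x hx ↦ by
      rw [← apply_eq_add_apply_zero A hlin x, ← hA.2]
      exact mem_image_of_mem A hx
    ext x
    simp [apply_eq_add_apply_zero A hlin x, hA0]
  refine Finite.of_injective (fun A : stabilizer W C ↦ (⟨A.1.linear, A.2.1⟩ : W)) ?_
  rintro ⟨A, hA⟩ ⟨B, hB⟩ hAB
  have hlin : linearHom (B⁻¹ * A) = 1 := by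
    rw [map_mul, map_inv, inv_mul_eq_one]
    exact (congrArg Subtype.val hAB).symm
  have := translation_trivial _ (mul_mem (inv_mem hB) hA) hlin
  exact Subtype.ext (inv_mul_eq_one.mp this).symm

lemma exists_forall_apply_eq_self_of_finite {C : Set E} (hconv : Convex ℝ C) (hne : C.Nonempty)
    (Γ : Subgroup (E ≃ᵃ[ℝ] E)) [Finite Γ] (hΓ : ∀ A ∈ Γ, MapsTo A C C) :
    ∃ x ∈ C, ∀ A ∈ Γ, A x = x := by
  classical
  have := Fintype.ofFinite Γ
  obtain ⟨x₀, hx₀⟩ := hne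
  refine ⟨Finset.univ.centroid ℝ fun B : Γ ↦ B.1 x₀, ?_, fun A hA ↦ ?_⟩
  · rw [Finset.centroid_eq_centerMass _ Finset.univ_nonempty]
    exact hconv.centerMass_mem (fun _ _ ↦ by simp) (by simp) fun B _ ↦ hΓ B B.2 hx₀
  · have hmap := Finset.univ.map_affineCombination (fun B : Γ ↦ B.1 x₀) _
      (Finset.univ.sum_centroidWeights_eq_one_of_nonempty ℝ Finset.univ_nonempty) A.toAffineMap
    rw [← Finset.centroid_def, ← Finset.centroid_def] at hmap
    have hperm := Finset.univ.centroid_map ℝ (Equiv.mulLeft (⟨A, hA⟩ : Γ)).toEmbedding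
      fun B : Γ ↦ B.1 x₀
    rw [Finset.map_univ_equiv] at hperm
    exact hmap.trans hperm.symm

end AffineEquiv

lemma eq_zero_of_forall_abs_add_mul_lt_one {a b : ℝ} (h : ∀ n : ℕ, |a + n * b| < 1) : b = 0 := by
  by_contra hb
  obtain ⟨n, hn⟩ := exists_nat_gt (2 / |b|)
  rw [div_lt_iff₀ (abs_pos.mpr hb)] at hn
  have h0 := h 0
  have hn' := h n
  rw [Nat.cast_zero, zero_mul, add_zero] at h0
  have : |(n : ℝ) * b| ≤ |a + n * b| + |a| := by
    simpa using abs_sub (a + n * b) a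
  rw [abs_mul, Nat.abs_cast] at this
  linarith

namespace RootPairing

variable {ι V N : Type*} [AddCommGroup V] [Module ℝ V] [AddCommGroup N] [Module ℝ N]
  (P : RootPairing ι ℝ V N) {l : ℕ} (s : Fin l → ι) (θ : ι)

def IsSimpleSystem : Prop :=
  ∀ k, (∃ c : Fin l → ℕ, P.root k = ∑ j, (c j : ℝ) • P.root (s j)) ∨
    (∃ c : Fin l → ℕ, P.root k = -∑ j, (c j : ℝ) • P.root (s j))

def IsHighestRoot : Prop :=
  ∀ k, ∃ c : Fin l → ℕ, P.root θ - P.root k = ∑ j, (c j : ℝ) • P.root (s j)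

def alcove : Set N :=
  {e | (∀ i, 0 < P.root' (s i) e) ∧ P.root' θ e < 1}

lemma toLinearMap_sum_smul_root_apply (c : Fin l → ℕ) (x : N) :
    P.toLinearMap (∑ j, (c j : ℝ) • P.root (s j)) x =
      ∑ j, (c j : ℝ) * P.root' (s j) x := by
  simp [map_sum]

variable {P s θ}

lemma root'_apply_eq_zero_of_isSimpleSystem (hs : P.IsSimpleSystem s) {x : N}
    (hx : ∀ j, P.root' (s j) x = 0) (k : ι) : P.root' k x = 0 := by
  rcases hs k with ⟨c, hc⟩ | ⟨c, hc⟩ <;> simp [root', hc, hx]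

lemma root'_apply_pos_of_eq_sum {x : N} (hx : ∀ j, 0 < P.root' (s j) x) {k : ι}
    {c : Fin l → ℕ} (hc : P.root k = ∑ j, (c j : ℝ) • P.root (s j)) : 0 < P.root' k x := by
  obtain ⟨j₀, hj₀⟩ : ∃ j, c j ≠ 0 := by
    by_contra! h
    exact P.ne_zero k (by simp [hc, h])
  rw [root', hc, toLinearMap_sum_smul_root_apply]
  exact Finset.sum_pos' (fun j _ ↦ mul_nonneg (Nat.cast_nonneg _) (hx j).le)
    ⟨j₀, Finset.mem_univ _, mul_pos (by positivity) (hx j₀)⟩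

lemma root'_apply_le_of_isHighestRoot (hθ : P.IsHighestRoot s θ) {x : N}
    (hx : ∀ j, 0 ≤ P.root' (s j) x) (k : ι) : P.root' k x ≤ P.root' θ x := by
  obtain ⟨c, hc⟩ := hθ k
  have : P.root' θ x - P.root' k x = ∑ j, (c j : ℝ) * P.root' (s j) x := by
    rw [root', root', ← LinearMap.sub_apply, ← map_sub, hc, toLinearMap_sum_smul_root_apply]
  linarith [Finset.sum_nonneg fun j (_ : j ∈ Finset.univ) ↦ mul_nonneg (c j).cast_nonneg (hx j)]

lemma abs_root'_apply_mem_Ioo (hs : P.IsSimpleSystem s) (hθ : P.IsHighestRoot s θ) {e : N}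
    (he : e ∈ P.alcove s θ) (k : ι) : |P.root' k e| ∈ Ioo 0 1 := by
  have hpos {k : ι} {c : Fin l → ℕ} (hc : P.root k = ∑ j, (c j : ℝ) • P.root (s j)) :
      P.root' k e ∈ Ioo 0 1 :=
    ⟨root'_apply_pos_of_eq_sum he.1 hc,
      (root'_apply_le_of_isHighestRoot hθ (fun j ↦ (he.1 j).le) k).trans_lt he.2⟩
  rcases hs k with ⟨c, hc⟩ | ⟨c, hc⟩
  · rw [abs_of_pos (hpos hc).1]
    exact hpos hc
  · obtain ⟨k', hk'⟩ : -P.root k ∈ range P.root :=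
      P.neg_mem_range_root_iff.mpr (mem_range_self k)
    have hk'e : P.root' k' e = -P.root' k e := by simp [root', hk']
    have := hpos (c := c) (by rw [hk', hc, neg_neg])
    rwa [hk'e, ← abs_of_pos this.1, abs_neg] at this

lemma root'_apply_ne_intCast (hs : P.IsSimpleSystem s) (hθ : P.IsHighestRoot s θ) {e : N}
    (he : e ∈ P.alcove s θ) (k : ι) (z : ℤ) : P.root' k e ≠ z := by
  intro hz
  have := abs_root'_apply_mem_Ioo hs hθ he k
  rw [hz, ← Int.cast_abs, mem_Ioo] at this
  norm_cast at this
  omega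

variable (P s θ)

lemma convex_alcove : Convex ℝ (P.alcove s θ) := by
  have : P.alcove s θ = (⋂ i, {e | 0 < P.root' (s i) e}) ∩ {e | P.root' θ e < 1} := by
    ext; simp [alcove]
  rw [this]
  exact (convex_iInter fun i ↦ convex_halfSpace_gt (P.root' (s i)).isLinear 0).inter
    (convex_halfSpace_lt (P.root' θ).isLinear 1)

variable {P s θ}

lemma alcove_nonempty [FiniteDimensional ℝ N] (hN : Module.finrank ℝ N = l)
    (hspan : Submodule.span ℝ (range P.root) = ⊤) (hs : P.IsSimpleSystem s) :
    (P.alcove s θ).Nonempty := by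
  let L : N →ₗ[ℝ] Fin l → ℝ := LinearMap.pi fun j ↦ P.root' (s j)
  have hL : Function.Injective L := by
    rw [← LinearMap.ker_eq_bot, Submodule.eq_bot_iff]
    exact fun x hx ↦ P.eq_zero_of_forall_root'_apply_eq_zero hspan
      (root'_apply_eq_zero_of_isSimpleSystem hs (congrFun hx))
  obtain ⟨e, he⟩ := (LinearMap.injective_iff_surjective_of_finrank_eq_finrank
    (by simp [hN])).mp hL fun _ ↦ 1
  have he (j : Fin l) : P.root' (s j) e = 1 := congrFun he j
  set t : ℝ := (|P.root' θ e| + 1)⁻¹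
  have ht : 0 < t := by positivity
  refine ⟨t • e, fun j ↦ by simp [he j, ht], ?_⟩
  calc P.root' θ (t • e) = t * P.root' θ e := by simp
    _ ≤ t * |P.root' θ e| := by gcongr; exact le_abs_self _
    _ < t * (|P.root' θ e| + 1) := by gcongr; linarith
    _ = 1 := inv_mul_cancel₀ (by positivity)

lemma eq_zero_of_forall_add_mem_alcove (hspan : Submodule.span ℝ (range P.root) = ⊤)
    (hs : P.IsSimpleSystem s) (hθ : P.IsHighestRoot s θ) (hne : (P.alcove s θ).Nonempty)
    {v : N} (hv : ∀ x ∈ P.alcove s θ, x + v ∈ P.alcove s θ) : v = 0 := by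
  obtain ⟨e, he⟩ := hne
  have hmem (n : ℕ) : e + n • v ∈ P.alcove s θ := by
    induction n with
    | zero => simpa using he
    | succ n ih => simpa [succ_nsmul, add_assoc] using hv _ ih
  refine P.eq_zero_of_forall_root'_apply_eq_zero hspan fun k ↦
    eq_zero_of_forall_abs_add_mul_lt_one (a := P.root' k e) fun n ↦ ?_
  simpa using (abs_root'_apply_mem_Ioo hs hθ (hmem n) k).2

end RootPairing

/-- The torus is modelled as `E = Fin l → ℝ` modulo `Q(R^∨)`, and `ψ(μ_x)` as the linear part `g`
of the element `y ↦ g y + μ` of `Γ_C` whose translation part `μ ∈ P(R^∨)` represents `x`, so that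
`ψ(μ_x)(u) = x · u` reads `(n - μ) - g n ∈ Q(R^∨)`. -/
theorem exists_simultaneous_regular_element_general
    {l : ℕ} {ι V : Type*} [Fintype ι] [AddCommGroup V] [Module ℝ V]
    (P : RootPairing ι ℝ V (Fin l → ℝ))
    (hrootSpan : Submodule.span ℝ (Set.range P.root) = ⊤)
    (hcorootSpan : Submodule.span ℝ (Set.range P.coroot) = ⊤)
    (s : Fin l → ι)
    (hbase : ∀ k : ι,
      (∃ c : Fin l → ℕ, P.root k = ∑ j, (c j : ℝ) • P.root (s j)) ∨
      (∃ c : Fin l → ℕ, P.root k = -∑ j, (c j : ℝ) • P.root (s j)))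
    (θ : ι)
    (hhighest : ∀ k : ι, ∃ c : Fin l → ℕ,
      P.root θ - P.root k = ∑ j, (c j : ℝ) • P.root (s j))
    (PRv QRv : AddSubgroup (Fin l → ℝ))
    (C : Set (Fin l → ℝ))
    (hC : C = {e : Fin l → ℝ |
      (∀ i : Fin l, 0 < P.toLinearMap (P.root (s i)) e) ∧ P.toLinearMap (P.root θ) e < 1}) :
    ∃ n : Fin l → ℝ,
      (∀ i : ι, ∀ z : ℤ, P.toLinearMap (P.root i) n ≠ (z : ℝ)) ∧
      (∀ (T : (Fin l → ℝ) ≃ (Fin l → ℝ)) (g : (Fin l → ℝ) ≃ₗ[ℝ] (Fin l → ℝ))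
          (μ : Fin l → ℝ), g ∈ Subgroup.closure (Set.range P.flip.reflection) → μ ∈ PRv → (∀ y, T y = g y + μ) →
          T '' C = C → (n - μ) - g n ∈ QRv) := by
  obtain rfl : C = P.alcove s θ := hC
  let W := Subgroup.closure (range P.flip.reflection)
  have : Finite W := P.flip.finite_closure_range_reflection hcorootSpan
  have hne := RootPairing.alcove_nonempty (θ := θ) (Module.finrank_fin_fun ℝ) hrootSpan hbase
  have : Finite (AffineEquiv.stabilizer W (P.alcove s θ)) := AffineEquiv.finite_stabilizer
    fun _ ↦ RootPairing.eq_zero_of_forall_add_mem_alcove hrootSpan hbase hhighest hne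
  obtain ⟨n, hn, hfix⟩ := AffineEquiv.exists_forall_apply_eq_self_of_finite (P.convex_alcove s θ)
    hne (AffineEquiv.stabilizer W _) fun A hA ↦ (mapsTo_image A _).mono_right hA.2.subset
  refine ⟨n, RootPairing.root'_apply_ne_intCast hbase hhighest hn, fun T g μ hg _ hT hTC ↦ ?_⟩
  let A := g.toAffineEquiv.trans (AffineEquiv.constVAdd ℝ _ μ)
  have hAT : ⇑A = T := funext fun y ↦ by simp [A, hT, add_comm]
  have hfixed : g n + μ = n := by
    rw [← hT, ← hAT]
    exact hfix A ⟨hg, hAT ▸ hTC⟩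
  rw [sub_sub, add_comm μ, hfixed, sub_self]
  exact zero_mem QRv

/-- **Simultaneous regular element** (Theorem `t:s`(a) / first part of Theorem
`t:monodromy`).  Let `G` be a connected simply connected simple complex algebraic group with
maximal torus `A`, Weyl group `W`, center `Z ≅ P(R^∨)/Q(R^∨)` (via a fixed embedding
`ℚ/ℤ ↪ ℂˣ`) and Bourbaki homomorphism `ψ : P(R^∨)/Q(R^∨) → W`.  We identify the
(compact part of the) torus `A = Hom(P(R), ℂˣ)` with `E/Q(R^∨)` where `E = Fin l → ℝ` is the
coweight space of the (reduced irreducible crystallographic) root system `P`; a class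
`ν ∈ P(R^∨)/Q(R^∨)` corresponds to the central element `x_ν ∈ Z`, and `ψ(ν)` is the linear
part of the unique element of the stabilizer `Γ_C` of the fundamental alcove `C` whose
translation part represents `ν`.  Then there exists a single regular element `u ∈ A`
(represented by `n ∈ E`, regular meaning `⟨α, n⟩ ∉ ℤ` for all roots `α`) such that
`ψ(μ_x)(u) = x · u` simultaneously for all `x ∈ Z`; i.e. for every element of `Γ_C`, with
linear part `g` and translation part `μ ∈ P(R^∨)`, one has `(n - μ) - g(n) ∈ Q(R^∨)`. -/
theorem exists_simultaneous_regular_element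
    {l : ℕ} {ι V : Type*} [Fintype ι] [AddCommGroup V] [Module ℝ V]
    (P : RootPairing ι ℝ V (Fin l → ℝ))
    (hrootSpan : Submodule.span ℝ (Set.range P.root) = ⊤)
    (hred : P.IsReduced) (hcrys : P.IsCrystallographic)
    (hcorootSpan : Submodule.span ℝ (Set.range P.coroot) = ⊤)
    (hirr : ¬∃ s : Set ι, s.Nonempty ∧ sᶜ.Nonempty ∧
      ∀ i ∈ s, ∀ j ∈ sᶜ, P.toLinearMap (P.root i) (P.coroot j) = 0)
    (s : Fin l → ι)
    (hbase : ∀ k : ι,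
      (∃ c : Fin l → ℕ, P.root k = ∑ j, (c j : ℝ) • P.root (s j)) ∨
      (∃ c : Fin l → ℕ, P.root k = -∑ j, (c j : ℝ) • P.root (s j)))
    (θ : ι)
    (hhighest : ∀ k : ι, ∃ c : Fin l → ℕ,
      P.root θ - P.root k = ∑ j, (c j : ℝ) • P.root (s j))
    (PRv QRv : AddSubgroup (Fin l → ℝ))
    (hPRv : PRv = {n : Fin l → ℝ | ∀ i : ι, ∃ z : ℤ, P.toLinearMap (P.root i) n = (z : ℝ)})
    (hQRv : QRv = AddSubgroup.closure (Set.range P.coroot))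
    (C : Set (Fin l → ℝ))
    (hC : C = {e : Fin l → ℝ |
      (∀ i : Fin l, 0 < P.toLinearMap (P.root (s i)) e) ∧ P.toLinearMap (P.root θ) e < 1}) :
    ∃ n : Fin l → ℝ,
      (∀ i : ι, ∀ z : ℤ, P.toLinearMap (P.root i) n ≠ (z : ℝ)) ∧
      (∀ (T : (Fin l → ℝ) ≃ (Fin l → ℝ)) (g : (Fin l → ℝ) ≃ₗ[ℝ] (Fin l → ℝ))
          (μ : Fin l → ℝ), g ∈ Subgroup.closure (Set.range P.flip.reflection) → μ ∈ PRv → (∀ y, T y = g y + μ) →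
          T '' C = C → (n - μ) - g n ∈ QRv) :=
  exists_simultaneous_regular_element_general P hrootSpan hcorootSpan s hbase θ hhighest PRv QRv C
    hC
end
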